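/- For all n ∈ ℕ, all Milner expressions e, f, g₁, …, g_m, h₁, …, h_m and all distinct variables v_{i₁}, …, v_{i_m}: if e ~^(n) f and g_j ~^(n) h_j for every j ∈ {1, …, m}, then e[(g₁, …, g_m)/(v_{i₁}, …, v_{i_m})] ~^(n) f[(h₁, …, h_m)/(v_{i₁}, …, v_{i_m})]. -/
import Mathlib


open Classical in
/-- The lifting `d↑` of a distance function on `X` to `Σ × X + V`. -/
noncomputable def distLift {A V X : Type*} (d : X → X → ℝ) :
    ((A × X) ⊕ V) → ((A × X) ⊕ V) → ℝ
  | Sum.inl (a, x), Sum.inl (b, y) => if a = b then (1 / 2) * d x y else 1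
  | Sum.inr v, Sum.inr w => if v = w then 0 else 1
  | _, _ => 1

/-- Supremum of `f` over a finite set, with the convention `sup ∅ = 0`. -/
noncomputable def hSup {Y : Type*} (s : Finset Y) (f : Y → ℝ) : ℝ :=
  if h : s.Nonempty then s.sup' h f else 0

/-- Infimum of `f` over a finite set, with the convention `inf ∅ = 1`. -/
noncomputable def hInf {Y : Type*} (s : Finset Y) (f : Y → ℝ) : ℝ :=
  if h : s.Nonempty then s.inf' h f else 1

/-- Hausdorff lifting of a distance function to finite subsets. -/
noncomputable def hausdorffDist {X : Type*} (d : X → X → ℝ) (s t : Finset X) : ℝ :=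
  max (hSup s fun x => hInf t fun y => d x y) (hSup t fun y => hInf s fun x => d y x)

/-- The map `Φ_β` associated with a prechart `(Q, β)`. -/
noncomputable def Phi {A V Q : Type*} (β : Q → Finset ((A × Q) ⊕ V))
    (d : Q → Q → ℝ) : Q → Q → ℝ :=
  fun q₁ q₂ => hausdorffDist (distLift d) (β q₁) (β q₂)

/-- `d` is a 1-bounded pseudometric on `X`. -/
structure IsBPMet {X : Type*} (d : X → X → ℝ) : Prop where
  nonneg : ∀ x y, 0 ≤ d x y
  le_one : ∀ x y, d x y ≤ 1
  refl : ∀ x, d x x = 0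
  symm : ∀ x y, d x y = d y x
  triangle : ∀ x y z, d x z ≤ d x y + d y z

/-- A bisimulation between two precharts. -/
def IsBisim {A V Q₁ Q₂ : Type*} (β₁ : Q₁ → Finset ((A × Q₁) ⊕ V))
    (β₂ : Q₂ → Finset ((A × Q₂) ⊕ V)) (R : Q₁ → Q₂ → Prop) : Prop :=
  ∀ q₁ q₂, R q₁ q₂ →
    (∀ v : V, Sum.inr v ∈ β₁ q₁ ↔ Sum.inr v ∈ β₂ q₂) ∧
    (∀ (a : A) (q₁' : Q₁), Sum.inl (a, q₁') ∈ β₁ q₁ →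
      ∃ q₂', Sum.inl (a, q₂') ∈ β₂ q₂ ∧ R q₁' q₂') ∧
    (∀ (a : A) (q₂' : Q₂), Sum.inl (a, q₂') ∈ β₂ q₂ →
      ∃ q₁', Sum.inl (a, q₁') ∈ β₁ q₁ ∧ R q₁' q₂')

/-- Bisimilarity of two states of a prechart. -/
def Bisimilar {A V Q : Type*} (β : Q → Finset ((A × Q) ⊕ V)) (q₁ q₂ : Q) : Prop :=
  ∃ R, IsBisim β β R ∧ R q₁ q₂

/-- A prechart homomorphism: a function whose graph is a bisimulation. -/
def IsHom {A V Q₁ Q₂ : Type*} (β₁ : Q₁ → Finset ((A × Q₁) ⊕ V))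
    (β₂ : Q₂ → Finset ((A × Q₂) ⊕ V)) (f : Q₁ → Q₂) : Prop :=
  IsBisim β₁ β₂ fun q₁ q₂ => q₂ = f q₁

/-- Stratification of bisimilarity between two precharts. -/
def Strat2 {A V Q₁ Q₂ : Type*} (β₁ : Q₁ → Finset ((A × Q₁) ⊕ V))
    (β₂ : Q₂ → Finset ((A × Q₂) ⊕ V)) : ℕ → Q₁ → Q₂ → Prop
  | 0 => fun _ _ => True
  | n + 1 => fun q₁ q₂ =>
      (∀ v : V, Sum.inr v ∈ β₁ q₁ ↔ Sum.inr v ∈ β₂ q₂) ∧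
      (∀ (a : A) (q₁' : Q₁), Sum.inl (a, q₁') ∈ β₁ q₁ →
        ∃ q₂', Sum.inl (a, q₂') ∈ β₂ q₂ ∧ Strat2 β₁ β₂ n q₁' q₂') ∧
      (∀ (a : A) (q₂' : Q₂), Sum.inl (a, q₂') ∈ β₂ q₂ →
        ∃ q₁', Sum.inl (a, q₁') ∈ β₁ q₁ ∧ Strat2 β₁ β₂ n q₁' q₂')

/-- Stratification of bisimilarity on a single prechart. -/
def Strat {A V Q : Type*} (β : Q → Finset ((A × Q) ⊕ V)) : ℕ → Q → Q → Prop :=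
  Strat2 β β

/-- One-step transition relation of a prechart. -/
def StepRel {A V Q : Type*} (β : Q → Finset ((A × Q) ⊕ V)) (q q' : Q) : Prop :=
  ∃ a : A, Sum.inl (a, q') ∈ β q

/-- A prechart is locally finite if every state reaches only finitely many states. -/
def LocFinite {A V Q : Type*} (β : Q → Finset ((A × Q) ⊕ V)) : Prop :=
  ∀ q : Q, {q' | Relation.ReflTransGen (StepRel β) q q'}.Finite

/-- `bd` is the least fixpoint of `Φ_β` in the lattice of 1-bounded pseudometrics. -/
def IsLfpDist {A V Q : Type*} (β : Q → Finset ((A × Q) ⊕ V)) (bd : Q → Q → ℝ) : Prop :=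
  IsBPMet bd ∧ Phi β bd = bd ∧
    ∀ d : Q → Q → ℝ, IsBPMet d → Phi β d = d → ∀ x y, bd x y ≤ d x y

open Classical in
/-- The discrete pseudometric, the top element of `D_X`. -/
noncomputable def discreteDist {X : Type*} : X → X → ℝ :=
  fun x y => if x = y then 0 else 1

/-- Iterates `Φ_β^{(p)}` of `Φ_β` starting from the discrete pseudometric. -/
noncomputable def PhiIter {A V Q : Type*} (β : Q → Finset ((A × Q) ⊕ V)) :
    ℕ → Q → Q → ℝ
  | 0 => discreteDist
  | n + 1 => Phi β (PhiIter β n)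


/-- Milner expressions over an alphabet `A`, with variables drawn from `ℕ`
(a countably infinite set of variables). -/
inductive Exp (A : Type*) : Type _ where
  | zero : Exp A
  | var : ℕ → Exp A
  | act : A → Exp A → Exp A
  | plus : Exp A → Exp A → Exp A
  | mu : ℕ → Exp A → Exp A
deriving DecidableEq

namespace Exp

/-- Free variables of an expression. -/
def fv {A : Type*} : Exp A → Finset ℕ
  | .zero => ∅
  | .var v => {v}
  | .act _ e => fv e
  | .plus e f => fv e ∪ fv f
  | .mu v e => (fv e).erase v

/-- A fresh variable not belonging to the given finite set. -/
def freshVar (s : Finset ℕ) : ℕ := s.sup id + 1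

/-- Simultaneous capture-avoiding substitution: `subst σ e` substitutes `σ w` for every
free occurrence of each variable `w` in `e`, renaming the bound variable of a
`μ`-binder whenever it would capture a free variable of a substituted expression. -/
def subst {A : Type*} : (ℕ → Exp A) → Exp A → Exp A
  | _, .zero => .zero
  | σ, .var v => σ v
  | σ, .act a e => .act a (subst σ e)
  | σ, .plus e f => .plus (subst σ e) (subst σ f)
  | σ, .mu v e =>
      let S : Finset ℕ := ((fv e).erase v).biUnion fun w => fv (σ w)
      let v' : ℕ := if v ∈ S then freshVar S else v
      .mu v' (subst (Function.update σ v (.var v')) e)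

/-- Substitution of a single expression `t` for the variable `v`. -/
def subst1 {A : Type*} (e : Exp A) (v : ℕ) (t : Exp A) : Exp A :=
  subst (Function.update Exp.var v t) e
end Exp

section Dest
variable {A : Type*} [DecidableEq A]

/-- Successors contributed by one transition/output of the body of `μv.e`,
where `me = μv.e`. -/
def destStep (v : ℕ) (me : Exp A) : ((A × Exp A) ⊕ ℕ) → Finset ((A × Exp A) ⊕ ℕ)
  | Sum.inl (a, e') => {Sum.inl (a, Exp.subst1 e' v me)}
  | Sum.inr w => if w = v then ∅ else {Sum.inr w}

/-- The prechart structure on Milner expressions, given by the operational rules: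
`a.e →a e`; `v ▷ v`; `e + f` inherits the transitions and outputs of `e` and `f`;
`μw.e ▷ v` when `e ▷ v` and `v ≠ w`; `μv.e →a e'[μv.e/v]` whenever `e →a e'`. -/
def dest : Exp A → Finset ((A × Exp A) ⊕ ℕ)
  | .zero => ∅
  | .var v => {Sum.inr v}
  | .act a e => {Sum.inl (a, e)}
  | .plus e f => dest e ∪ dest f
  | .mu v e => (dest e).biUnion (destStep v (.mu v e))

end Dest


/-! ### Auxiliary lemmas -/

namespace Exp
variable {A : Type*}

theorem freshVar_not_mem (s : Finset ℕ) : freshVar s ∉ s := by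
  intro h
  have := Finset.le_sup (f := id) h
  simp only [id] at this
  simp only [freshVar] at h this
  omega

/-- The fresh set used in the `mu` case of `subst`. -/
def muS (σ : ℕ → Exp A) (v : ℕ) (e : Exp A) : Finset ℕ :=
  ((fv e).erase v).biUnion fun w => fv (σ w)

/-- The binder chosen in the `mu` case of `subst`. -/
def muV (σ : ℕ → Exp A) (v : ℕ) (e : Exp A) : ℕ :=
  if v ∈ muS σ v e then freshVar (muS σ v e) else v

theorem subst_zero (σ : ℕ → Exp A) : subst σ (.zero) = .zero := rfl
theorem subst_var (σ : ℕ → Exp A) (v : ℕ) : subst σ (.var v) = σ v := rfl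
theorem subst_act (σ : ℕ → Exp A) (a : A) (e : Exp A) :
    subst σ (.act a e) = .act a (subst σ e) := rfl
theorem subst_plus (σ : ℕ → Exp A) (e f : Exp A) :
    subst σ (.plus e f) = .plus (subst σ e) (subst σ f) := rfl
theorem subst_mu (σ : ℕ → Exp A) (v : ℕ) (e : Exp A) :
    subst σ (.mu v e) =
      .mu (muV σ v e) (subst (Function.update σ v (.var (muV σ v e))) e) := rfl

theorem muV_fresh (σ : ℕ → Exp A) (v : ℕ) (e : Exp A) :
    ∀ w ∈ (fv e).erase v, muV σ v e ∉ fv (σ w) := by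
  intro w hw hmem
  have hS : fv (σ w) ⊆ muS σ v e := fun u hu =>
    Finset.mem_biUnion.2 ⟨w, hw, hu⟩
  by_cases hv : v ∈ muS σ v e
  · have : muV σ v e = freshVar (muS σ v e) := if_pos hv
    exact freshVar_not_mem _ (this ▸ hS hmem)
  · have : muV σ v e = v := if_neg hv
    exact hv (hS (this ▸ hmem))

theorem fv_subst (σ : ℕ → Exp A) (e : Exp A) :
    fv (subst σ e) = (fv e).biUnion fun w => fv (σ w) := by
  induction e generalizing σ with
  | zero => simp [subst_zero, fv]
  | var v => simp [subst_var, fv]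
  | act a e ih => simp [subst_act, fv, ih]
  | plus e f ihe ihf =>
      simp only [subst_plus, fv, ihe, ihf]
      ext u
      simp only [Finset.mem_union, Finset.mem_biUnion]
      constructor
      · rintro (⟨w, hw, hu⟩ | ⟨w, hw, hu⟩)
        exacts [⟨w, Or.inl hw, hu⟩, ⟨w, Or.inr hw, hu⟩]
      · rintro ⟨w, hw | hw, hu⟩
        exacts [Or.inl ⟨w, hw, hu⟩, Or.inr ⟨w, hw, hu⟩]
  | mu v e ih =>
      simp only [subst_mu, fv, ih]
      ext u
      simp only [Finset.mem_erase, Finset.mem_biUnion]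
      constructor
      · rintro ⟨huv', w, hw, hu⟩
        rcases eq_or_ne w v with rfl | hwv
        · rw [Function.update_self] at hu
          simp [fv] at hu
          exact absurd hu huv'
        · rw [Function.update_of_ne hwv] at hu
          exact ⟨w, ⟨hwv, hw⟩, hu⟩
      · rintro ⟨w, hw, hu⟩
        have hw' : w ∈ (fv e).erase v := Finset.mem_erase.2 hw
        refine ⟨?_, w, hw.2, ?_⟩
        · intro h
          subst h
          exact muV_fresh σ v e w hw' hu
        · rw [Function.update_of_ne hw.1]; exact hu

theorem subst_congr_fv {σ τ : ℕ → Exp A} {e : Exp A}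
    (h : ∀ w ∈ fv e, σ w = τ w) : subst σ e = subst τ e := by
  induction e generalizing σ τ with
  | zero => rfl
  | var v => exact h v (by simp [fv])
  | act a e ih => simp only [subst_act]; rw [ih (fun w hw => h w (by simpa [fv] using hw))]
  | plus e f ihe ihf =>
      simp only [subst_plus]
      rw [ihe (fun w hw => h w (by simp [fv, hw])), ihf (fun w hw => h w (by simp [fv, hw]))]
  | mu v e ih =>
      have hS : muS σ v e = muS τ v e := by
        apply Finset.biUnion_congr rfl
        intro w hw
        rw [h w (by simpa [fv] using hw)]
      have hV : muV σ v e = muV τ v e := by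
        simp only [muV, hS]
      simp only [subst_mu, hV]
      congr 1
      apply ih
      intro w hw
      rcases eq_or_ne w v with rfl | hwv
      · simp [Function.update_self]
      · rw [Function.update_of_ne hwv, Function.update_of_ne hwv]
        exact h w (by simp [fv, Finset.mem_erase, hwv, hw])

theorem subst_id {σ : ℕ → Exp A} {e : Exp A}
    (h : ∀ w ∈ fv e, σ w = .var w) : subst σ e = e := by
  induction e generalizing σ with
  | zero => rfl
  | var v => exact h v (by simp [fv])
  | act a e ih => simp only [subst_act]; rw [ih (fun w hw => h w (by simpa [fv] using hw))]
  | plus e f ihe ihf =>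
      simp only [subst_plus]
      rw [ihe (fun w hw => h w (by simp [fv, hw])), ihf (fun w hw => h w (by simp [fv, hw]))]
  | mu v e ih =>
      have hS : muS σ v e = (fv e).erase v := by
        ext u
        simp only [muS, Finset.mem_biUnion]
        constructor
        · rintro ⟨w, hw, hu⟩
          rw [h w (by simp only [fv]; exact hw)] at hu
          simp [fv] at hu; rwa [hu]
        · intro hu
          exact ⟨u, hu, by rw [h u (by simp only [fv]; exact hu)]; simp [fv]⟩
      have hv : v ∉ muS σ v e := by rw [hS]; simp
      have hV : muV σ v e = v := if_neg hv
      simp only [subst_mu, hV]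
      congr 1
      apply ih
      intro w hw
      rcases eq_or_ne w v with rfl | hwv
      · simp [Function.update_self]
      · rw [Function.update_of_ne hwv]
        exact h w (by simp [fv, Finset.mem_erase, hwv, hw])

theorem subst1_id {e : Exp A} {v : ℕ} {t : Exp A} (h : v ∉ fv e) :
    subst1 e v t = e := by
  apply subst_id
  intro w hw
  have hwv : w ≠ v := fun hwv => h (hwv ▸ hw)
  exact Function.update_of_ne hwv _ _

end Exp

section DestLemmas
variable {A : Type*} [DecidableEq A]
open Exp

theorem dest_zero : dest (Exp.zero : Exp A) = ∅ := rfl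
theorem dest_var (v : ℕ) : dest (Exp.var v : Exp A) = {Sum.inr v} := rfl
theorem dest_act (a : A) (e : Exp A) : dest (Exp.act a e) = {Sum.inl (a, e)} := rfl
theorem dest_plus (e f : Exp A) : dest (Exp.plus e f) = dest e ∪ dest f := rfl
theorem dest_mu (v : ℕ) (e : Exp A) :
    dest (Exp.mu v e) = (dest e).biUnion (destStep v (.mu v e)) := rfl

theorem out_mu {v : ℕ} {e : Exp A} {u : ℕ} :
    Sum.inr u ∈ dest (Exp.mu v e) ↔ Sum.inr u ∈ dest e ∧ u ≠ v := by
  rw [dest_mu]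
  simp only [Finset.mem_biUnion]
  constructor
  · rintro ⟨x, hx, hu⟩
    match x with
    | Sum.inl (a, e') => simp [destStep] at hu
    | Sum.inr w =>
        simp only [destStep] at hu
        split at hu
        · simp at hu
        · simp at hu
          subst hu
          exact ⟨hx, by assumption⟩
  · rintro ⟨hu, huv⟩
    exact ⟨Sum.inr u, hu, by simp [destStep, huv]⟩

theorem tr_mu {v : ℕ} {e : Exp A} {a : A} {t : Exp A} :
    Sum.inl (a, t) ∈ dest (Exp.mu v e) ↔
      ∃ e', Sum.inl (a, e') ∈ dest e ∧ t = subst1 e' v (Exp.mu v e) := by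
  rw [dest_mu]
  simp only [Finset.mem_biUnion]
  constructor
  · rintro ⟨x, hx, ht⟩
    match x with
    | Sum.inl (b, e') =>
        simp only [destStep, Finset.mem_singleton, Sum.inl.injEq, Prod.mk.injEq] at ht
        obtain ⟨rfl, rfl⟩ := ht
        exact ⟨e', hx, rfl⟩
    | Sum.inr w =>
        simp only [destStep] at ht
        split at ht <;> simp at ht
  · rintro ⟨e', he', rfl⟩
    exact ⟨Sum.inl (a, e'), he', by simp [destStep]⟩

theorem out_fv {e : Exp A} {w : ℕ} (h : Sum.inr w ∈ dest e) : w ∈ fv e := by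
  induction e with
  | zero => simp [dest_zero] at h
  | var v => simp [dest_var] at h; simp [h, fv]
  | act a e ih => simp [dest_act] at h
  | plus e f ihe ihf =>
      rw [dest_plus, Finset.mem_union] at h
      rcases h with h | h
      · simp [fv, ihe h]
      · simp [fv, ihf h]
  | mu v e ih =>
      rw [out_mu] at h
      simp only [fv, Finset.mem_erase]
      exact ⟨h.2, ih h.1⟩

theorem tr_fv {e : Exp A} {a : A} {e' : Exp A} (h : Sum.inl (a, e') ∈ dest e) :
    fv e' ⊆ fv e := by
  induction e generalizing e' with
  | zero => simp [dest_zero] at h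
  | var v => simp [dest_var] at h
  | act b e ih =>
      simp only [dest_act, Finset.mem_singleton, Sum.inl.injEq, Prod.mk.injEq] at h
      rw [← h.2]
      simp [fv]
  | plus e f ihe ihf =>
      rw [dest_plus, Finset.mem_union] at h
      rcases h with h | h
      · exact (ihe h).trans (by simp [fv, Finset.subset_union_left])
      · exact (ihf h).trans (by simp [fv, Finset.subset_union_right])
  | mu v e ih =>
      rw [tr_mu] at h
      obtain ⟨d', hd', rfl⟩ := h
      rw [Exp.subst1, fv_subst]
      intro u hu
      rw [Finset.mem_biUnion] at hu
      obtain ⟨w, hw, hu⟩ := hu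
      rcases eq_or_ne w v with rfl | hwv
      · rw [Function.update_self] at hu
        exact hu
      · rw [Function.update_of_ne hwv] at hu
        simp only [fv] at hu ⊢
        rw [Finset.mem_singleton] at hu
        subst hu
        exact Finset.mem_erase.2 ⟨hwv, ih hd' hw⟩

theorem var_sub {e : Exp A} {w : ℕ} (σ : ℕ → Exp A) (h : Sum.inr w ∈ dest e) :
    dest (σ w) ⊆ dest (subst σ e) := by
  induction e generalizing σ with
  | zero => simp [dest_zero] at h
  | var v => simp [dest_var] at h; subst h; rw [subst_var]
  | act a e ih => simp [dest_act] at h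
  | plus e f ihe ihf =>
      rw [dest_plus, Finset.mem_union] at h
      rw [subst_plus, dest_plus]
      rcases h with h | h
      · exact (ihe σ h).trans Finset.subset_union_left
      · exact (ihf σ h).trans Finset.subset_union_right
  | mu v e ih =>
      rw [out_mu] at h
      obtain ⟨hw, hwv⟩ := h
      have hwfv : w ∈ (fv e).erase v := Finset.mem_erase.2 ⟨hwv, out_fv hw⟩
      have hfresh : muV σ v e ∉ fv (σ w) := muV_fresh σ v e w hwfv
      rw [subst_mu]
      set v' := muV σ v e
      set σ' := Function.update σ v (Exp.var v') with hσ'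
      have hσw : σ' w = σ w := Function.update_of_ne hwv _ _
      have hsub : dest (σ w) ⊆ dest (subst σ' e) := by
        rw [← hσw]; exact ih σ' hw
      intro x hx
      rw [dest_mu, Finset.mem_biUnion]
      refine ⟨x, hsub hx, ?_⟩
      match x with
      | Sum.inl (a, c) =>
          have hc : fv c ⊆ fv (σ w) := tr_fv hx
          have : Exp.subst1 c v' (Exp.mu v' (subst σ' e)) = c :=
            subst1_id (fun hv' => hfresh (hc hv'))
          simp [destStep, this]
      | Sum.inr u =>
          have hu : u ∈ fv (σ w) := out_fv hx
          have huv' : u ≠ v' := fun h => hfresh (h ▸ hu)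
          simp [destStep, huv']

theorem outchar {e : Exp A} {σ : ℕ → Exp A} {u : ℕ} :
    Sum.inr u ∈ dest (subst σ e) ↔ ∃ w, Sum.inr w ∈ dest e ∧ Sum.inr u ∈ dest (σ w) := by
  constructor
  · intro h
    induction e generalizing σ with
    | zero => simp [subst_zero, dest_zero] at h
    | var v => exact ⟨v, by simp [dest_var], by rwa [subst_var] at h⟩

    | act a e ih => simp [subst_act, dest_act] at h
    | plus e f ihe ihf =>
        rw [subst_plus, dest_plus, Finset.mem_union] at h
        rcases h with h | h
        · obtain ⟨w, hw, hu⟩ := ihe h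
          exact ⟨w, by rw [dest_plus]; exact Finset.mem_union_left _ hw, hu⟩
        · obtain ⟨w, hw, hu⟩ := ihf h
          exact ⟨w, by rw [dest_plus]; exact Finset.mem_union_right _ hw, hu⟩
    | mu v e ih =>
        rw [subst_mu, out_mu] at h
        obtain ⟨h, huv'⟩ := h
        obtain ⟨w, hw, hu⟩ := ih h
        rcases eq_or_ne w v with rfl | hwv
        · rw [Function.update_self, dest_var, Finset.mem_singleton] at hu
          exact absurd (Sum.inr.inj hu) huv'
        · rw [Function.update_of_ne hwv] at hu
          exact ⟨w, out_mu.2 ⟨hw, hwv⟩, hu⟩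
  · rintro ⟨w, hw, hu⟩
    exact var_sub σ hw hu

end DestLemmas

section StratLemmas
variable {A V Q : Type*} {β : Q → Finset ((A × Q) ⊕ V)}

theorem strat2_succ_iff {Q₁ Q₂ : Type*} {β₁ : Q₁ → Finset ((A × Q₁) ⊕ V)}
    {β₂ : Q₂ → Finset ((A × Q₂) ⊕ V)} {n : ℕ} {q₁ : Q₁} {q₂ : Q₂} :
    Strat2 β₁ β₂ (n + 1) q₁ q₂ ↔
      (∀ v : V, Sum.inr v ∈ β₁ q₁ ↔ Sum.inr v ∈ β₂ q₂) ∧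
      (∀ (a : A) (q₁' : Q₁), Sum.inl (a, q₁') ∈ β₁ q₁ →
        ∃ q₂', Sum.inl (a, q₂') ∈ β₂ q₂ ∧ Strat2 β₁ β₂ n q₁' q₂') ∧
      (∀ (a : A) (q₂' : Q₂), Sum.inl (a, q₂') ∈ β₂ q₂ →
        ∃ q₁', Sum.inl (a, q₁') ∈ β₁ q₁ ∧ Strat2 β₁ β₂ n q₁' q₂') := Iff.rfl

theorem strat_refl : ∀ (n : ℕ) (q : Q), Strat β n q q := by
  intro n
  induction n with
  | zero => intro q; trivial
  | succ n ih =>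
      intro q
      exact ⟨fun v => Iff.rfl, fun a q' h => ⟨q', h, ih q'⟩, fun a q' h => ⟨q', h, ih q'⟩⟩

theorem strat_symm : ∀ {n : ℕ} {q₁ q₂ : Q}, Strat β n q₁ q₂ → Strat β n q₂ q₁ := by
  intro n
  induction n with
  | zero => intro q₁ q₂ _; trivial
  | succ n ih =>
      rintro q₁ q₂ ⟨h1, h2, h3⟩
      exact ⟨fun v => (h1 v).symm,
        fun a q' h => (h3 a q' h).imp fun x ⟨hx, hs⟩ => ⟨hx, ih hs⟩,
        fun a q' h => (h2 a q' h).imp fun x ⟨hx, hs⟩ => ⟨hx, ih hs⟩⟩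

theorem strat_trans : ∀ {n : ℕ} {q₁ q₂ q₃ : Q},
    Strat β n q₁ q₂ → Strat β n q₂ q₃ → Strat β n q₁ q₃ := by
  intro n
  induction n with
  | zero => intros; trivial
  | succ n ih =>
      rintro q₁ q₂ q₃ ⟨h1, h2, h3⟩ ⟨g1, g2, g3⟩
      refine ⟨fun v => (h1 v).trans (g1 v), ?_, ?_⟩
      · intro a q' h
        obtain ⟨x, hx, hs⟩ := h2 a q' h
        obtain ⟨y, hy, hs'⟩ := g2 a x hx
        exact ⟨y, hy, ih hs hs'⟩
      · intro a q' h
        obtain ⟨x, hx, hs⟩ := g3 a q' h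
        obtain ⟨y, hy, hs'⟩ := h3 a x hx
        exact ⟨y, hy, ih hs' hs⟩

theorem strat_mono : ∀ {n : ℕ} {q₁ q₂ : Q}, Strat β (n + 1) q₁ q₂ → Strat β n q₁ q₂ := by
  intro n
  induction n with
  | zero => intros; trivial
  | succ n ih =>
      rintro q₁ q₂ ⟨h1, h2, h3⟩
      exact ⟨h1,
        fun a q' h => (h2 a q' h).imp fun x ⟨hx, hs⟩ => ⟨hx, ih hs⟩,
        fun a q' h => (h3 a q' h).imp fun x ⟨hx, hs⟩ => ⟨hx, ih hs⟩⟩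

end StratLemmas

section Main
variable {A : Type*} [DecidableEq A]
open Exp

theorem subst1_def (e : Exp A) (v : ℕ) (t : Exp A) :
    subst1 e v t = subst (Function.update Exp.var v t) e := rfl

/-- Stratified congruence property at level `n`. -/
def MProp (A : Type*) [DecidableEq A] (n : ℕ) : Prop :=
  ∀ (e f : Exp A) (σ τ : ℕ → Exp A), Strat dest n e f →
    (∀ w ∈ fv e ∪ fv f, Strat dest n (σ w) (τ w)) →
    Strat dest n (subst σ e) (subst τ f)

/-- Stratified composition-up-to property at level `n`. -/
def CProp (A : Type*) [DecidableEq A] (n : ℕ) : Prop :=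
  ∀ (d : Exp A) (α β γ : ℕ → Exp A),
    (∀ w ∈ fv d, Strat dest n (subst α (β w)) (γ w)) →
    Strat dest n (subst α (subst β d)) (subst γ d)

theorem keystep {n : ℕ} (hM : MProp A n) (hC : CProp A n)
    (σ : ℕ → Exp A) (v : ℕ) (d d' A' : Exp A)
    (hfv : fv d' ⊆ fv d)
    (hA : Strat dest n A' (subst (Function.update σ v (.var (muV σ v d))) d')) :
    Strat dest n (subst1 A' (muV σ v d) (subst σ (.mu v d)))
      (subst σ (subst1 d' v (.mu v d))) := by
  set v' := muV σ v d with hv'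
  set σ' := Function.update σ v (Exp.var v') with hσ'
  set M := subst σ (Exp.mu v d) with hMdef
  set ρ := Function.update Exp.var v' M with hρ
  have h1 : Strat dest n (subst ρ A') (subst ρ (subst σ' d')) :=
    hM _ _ _ _ hA (fun w _ => strat_refl n _)
  have h2 : Strat dest n (subst ρ (subst σ' d')) (subst (fun w => subst ρ (σ' w)) d') :=
    hC d' ρ σ' _ (fun w _ => strat_refl n _)
  have h3 : subst (fun w => subst ρ (σ' w)) d' = subst (Function.update σ v M) d' := by
    apply subst_congr_fv
    intro w hw
    rcases eq_or_ne w v with rfl | hwv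
    · rw [Function.update_self, hσ', Function.update_self, subst_var, hρ,
        Function.update_self]
    · rw [Function.update_of_ne hwv, hσ', Function.update_of_ne hwv]
      apply subst_id
      intro u hu
      have hwfv : w ∈ (fv d).erase v := Finset.mem_erase.2 ⟨hwv, hfv hw⟩
      have huv' : u ≠ v' := by
        intro h
        rw [h] at hu
        exact muV_fresh σ v d w hwfv hu
      rw [hρ, Function.update_of_ne huv']
  have h4 : Strat dest n (subst σ (subst (Function.update Exp.var v (Exp.mu v d)) d'))
      (subst (Function.update σ v M) d') := by
    apply hC
    intro w hw
    rcases eq_or_ne w v with rfl | hwv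
    · rw [Function.update_self, Function.update_self]
      exact strat_refl n _
    · rw [Function.update_of_ne hwv, Function.update_of_ne hwv, subst_var]
      exact strat_refl n _
  rw [subst1_def, subst1_def]
  exact strat_trans h1 (strat_trans h2 (h3 ▸ strat_symm h4))

theorem transChar {n : ℕ} (hM : MProp A n) (hC : CProp A n) :
    ∀ (e : Exp A) (σ : ℕ → Exp A) (a : A) (t : Exp A),
      Sum.inl (a, t) ∈ dest (subst σ e) →
      (∃ w, Sum.inr w ∈ dest e ∧ Sum.inl (a, t) ∈ dest (σ w)) ∨
      (∃ e', Sum.inl (a, e') ∈ dest e ∧ Strat dest n t (subst σ e')) := by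
  intro e
  induction e with
  | zero => intro σ a t h; simp [subst_zero, dest_zero] at h
  | var v => intro σ a t h; exact Or.inl ⟨v, by simp [dest_var], by rwa [subst_var] at h⟩
  | act b e ih =>
      intro σ a t h
      rw [subst_act, dest_act, Finset.mem_singleton] at h
      obtain ⟨rfl, rfl⟩ : a = b ∧ t = subst σ e := by
        simpa [Sum.inl.injEq, Prod.mk.injEq] using h
      exact Or.inr ⟨e, by simp [dest_act], strat_refl n _⟩
  | plus e f ihe ihf =>
      intro σ a t h
      rw [subst_plus, dest_plus, Finset.mem_union] at h
      rcases h with h | h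
      · rcases ihe σ a t h with ⟨w, hw, h'⟩ | ⟨e', he', h'⟩
        · exact Or.inl ⟨w, by rw [dest_plus]; exact Finset.mem_union_left _ hw, h'⟩
        · exact Or.inr ⟨e', by rw [dest_plus]; exact Finset.mem_union_left _ he', h'⟩
      · rcases ihf σ a t h with ⟨w, hw, h'⟩ | ⟨e', he', h'⟩
        · exact Or.inl ⟨w, by rw [dest_plus]; exact Finset.mem_union_right _ hw, h'⟩
        · exact Or.inr ⟨e', by rw [dest_plus]; exact Finset.mem_union_right _ he', h'⟩
  | mu v d ih =>
      intro σ a t h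
      rw [subst_mu, tr_mu] at h
      obtain ⟨A', hA', rfl⟩ := h
      rcases ih _ a A' hA' with ⟨w, hw, hw'⟩ | ⟨d', hd', hrel⟩
      · rcases eq_or_ne w v with rfl | hwv
        · rw [Function.update_self, dest_var] at hw'
          simp at hw'
        · rw [Function.update_of_ne hwv] at hw'
          left
          refine ⟨w, out_mu.2 ⟨hw, hwv⟩, ?_⟩
          have hwfv : w ∈ (fv d).erase v := Finset.mem_erase.2 ⟨hwv, out_fv hw⟩
          have heq : subst1 A' (muV σ v d)
              (Exp.mu (muV σ v d) (subst (Function.update σ v (.var (muV σ v d))) d)) = A' :=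
            subst1_id (fun hvv => muV_fresh σ v d w hwfv ((tr_fv hw') hvv))
          rw [heq]
          exact hw'
      · right
        refine ⟨subst1 d' v (.mu v d), tr_mu.2 ⟨d', hd', rfl⟩, ?_⟩
        have hk := keystep hM hC σ v d d' A' (tr_fv hd') hrel
        rw [subst_mu] at hk
        exact hk

theorem transChar' {n : ℕ} (hM : MProp A n) (hC : CProp A n) :
    ∀ (e : Exp A) (σ : ℕ → Exp A) (a : A) (e1 : Exp A),
      Sum.inl (a, e1) ∈ dest e →
      ∃ t, Sum.inl (a, t) ∈ dest (subst σ e) ∧ Strat dest n t (subst σ e1) := by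
  intro e
  induction e with
  | zero => intro σ a e1 h; simp [dest_zero] at h
  | var v => intro σ a e1 h; simp [dest_var] at h
  | act b e0 ih =>
      intro σ a e1 h
      simp only [dest_act, Finset.mem_singleton, Sum.inl.injEq, Prod.mk.injEq] at h
      obtain ⟨rfl, rfl⟩ := h
      exact ⟨subst σ e1, by simp [subst_act, dest_act], strat_refl n _⟩
  | plus e f ihe ihf =>
      intro σ a e1 h
      rw [dest_plus, Finset.mem_union] at h
      rcases h with h | h
      · obtain ⟨t, ht, hrel⟩ := ihe σ a e1 h
        exact ⟨t, by rw [subst_plus, dest_plus]; exact Finset.mem_union_left _ ht, hrel⟩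
      · obtain ⟨t, ht, hrel⟩ := ihf σ a e1 h
        exact ⟨t, by rw [subst_plus, dest_plus]; exact Finset.mem_union_right _ ht, hrel⟩
  | mu v d ih =>
      intro σ a e1 h
      rw [tr_mu] at h
      obtain ⟨d', hd', rfl⟩ := h
      obtain ⟨A', hA', hrel⟩ := ih (Function.update σ v (.var (muV σ v d))) a d' hd'
      refine ⟨subst1 A' (muV σ v d)
        (Exp.mu (muV σ v d) (subst (Function.update σ v (.var (muV σ v d))) d)), ?_, ?_⟩
      · rw [subst_mu]
        exact tr_mu.2 ⟨A', hA', rfl⟩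
      · have hk := keystep hM hC σ v d d' A' (tr_fv hd') hrel
        rw [subst_mu] at hk
        exact hk

end Main

section MainInd
variable {A : Type*} [DecidableEq A]
open Exp

theorem strat_act_congr {n : ℕ} {a : A} {x y : Exp A} (h : Strat dest n x y) :
    Strat dest (n + 1) (Exp.act a x) (Exp.act a y) := by
  refine ⟨fun u => by simp [dest_act], ?_, ?_⟩
  · intro b t ht
    simp only [dest_act, Finset.mem_singleton, Sum.inl.injEq, Prod.mk.injEq] at ht
    obtain ⟨rfl, rfl⟩ := ht
    exact ⟨y, by simp [dest_act], h⟩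
  · intro b t ht
    simp only [dest_act, Finset.mem_singleton, Sum.inl.injEq, Prod.mk.injEq] at ht
    obtain ⟨rfl, rfl⟩ := ht
    exact ⟨x, by simp [dest_act], h⟩

theorem strat_plus_congr {n : ℕ} {x₁ x₂ y₁ y₂ : Exp A}
    (h1 : Strat dest n x₁ y₁) (h2 : Strat dest n x₂ y₂) :
    Strat dest n (Exp.plus x₁ x₂) (Exp.plus y₁ y₂) := by
  match n with
  | 0 => trivial
  | n + 1 =>
      obtain ⟨o1, f1, b1⟩ := h1
      obtain ⟨o2, f2, b2⟩ := h2
      refine ⟨?_, ?_, ?_⟩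
      · intro u
        rw [dest_plus, dest_plus, Finset.mem_union, Finset.mem_union]
        exact or_congr (o1 u) (o2 u)
      · intro a t ht
        rw [dest_plus, Finset.mem_union] at ht
        rcases ht with ht | ht
        · obtain ⟨s, hs, hrel⟩ := f1 a t ht
          exact ⟨s, by rw [dest_plus]; exact Finset.mem_union_left _ hs, hrel⟩
        · obtain ⟨s, hs, hrel⟩ := f2 a t ht
          exact ⟨s, by rw [dest_plus]; exact Finset.mem_union_right _ hs, hrel⟩
      · intro a t ht
        rw [dest_plus, Finset.mem_union] at ht
        rcases ht with ht | ht
        · obtain ⟨s, hs, hrel⟩ := b1 a t ht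
          exact ⟨s, by rw [dest_plus]; exact Finset.mem_union_left _ hs, hrel⟩
        · obtain ⟨s, hs, hrel⟩ := b2 a t ht
          exact ⟨s, by rw [dest_plus]; exact Finset.mem_union_right _ hs, hrel⟩

theorem mainInd (A : Type*) [DecidableEq A] : ∀ n : ℕ, MProp A n ∧ CProp A n := by
  intro n
  induction n with
  | zero => exact ⟨fun _ _ _ _ _ _ => trivial, fun _ _ _ _ _ => trivial⟩
  | succ n ih =>
      obtain ⟨hM, hC⟩ := ih
      -- one-sided simulation for the substitution congruence
      have sim : ∀ (e f : Exp A) (σ τ : ℕ → Exp A), Strat dest (n + 1) e f →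
          (∀ w ∈ fv e ∪ fv f, Strat dest (n + 1) (σ w) (τ w)) →
          ∀ (a : A) (t : Exp A), Sum.inl (a, t) ∈ dest (subst σ e) →
          ∃ s, Sum.inl (a, s) ∈ dest (subst τ f) ∧ Strat dest n t s := by
        intro e f σ τ hef hst a t ht
        rcases transChar hM hC e σ a t ht with ⟨w, hw, hw'⟩ | ⟨e', he', hrel⟩
        · have hwf : Sum.inr w ∈ dest f := (hef.1 w).1 hw
          obtain ⟨s, hs, hts⟩ :=
            (hst w (Finset.mem_union_left _ (out_fv hw))).2.1 a t hw'
          exact ⟨s, var_sub τ hwf hs, hts⟩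
        · obtain ⟨f', hf', hef'⟩ := hef.2.1 a e' he'
          obtain ⟨s, hs, hrel'⟩ := transChar' hM hC f τ a f' hf'
          have h2 : Strat dest n (subst σ e') (subst τ f') := by
            apply hM _ _ _ _ hef'
            intro w hw
            apply strat_mono
            apply hst
            rcases Finset.mem_union.1 hw with h | h
            · exact Finset.mem_union_left _ (tr_fv he' h)
            · exact Finset.mem_union_right _ (tr_fv hf' h)
          exact ⟨s, hs, strat_trans hrel (strat_trans h2 (strat_symm hrel'))⟩
      have hMs : MProp A (n + 1) := by
        intro e f σ τ hef hst
        refine ⟨?_, ?_, ?_⟩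
        · intro u
          rw [outchar, outchar]
          constructor
          · rintro ⟨w, hw, hu⟩
            exact ⟨w, (hef.1 w).1 hw,
              ((hst w (Finset.mem_union_left _ (out_fv hw))).1 u).1 hu⟩
          · rintro ⟨w, hw, hu⟩
            exact ⟨w, (hef.1 w).2 hw,
              ((hst w (Finset.mem_union_right _ (out_fv hw))).1 u).2 hu⟩
        · exact sim e f σ τ hef hst
        · intro a s hs
          obtain ⟨t, ht, hrel⟩ := sim f e τ σ (strat_symm hef)
            (fun w hw => strat_symm (hst w (by rwa [Finset.union_comm]))) a s hs
          exact ⟨t, ht, strat_symm hrel⟩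
      refine ⟨hMs, ?_⟩
      intro d
      induction d with
      | zero => intro α β γ _; rw [subst_zero, subst_zero]; exact strat_refl _ _
      | var w => intro α β γ hyp; rw [subst_var, subst_var]; exact hyp w (by simp [fv])
      | act a d0 ihd =>
          intro α β γ hyp
          rw [subst_act, subst_act, subst_act]
          exact strat_act_congr
            (hC d0 α β γ (fun w hw => strat_mono (hyp w (by simpa [fv] using hw))))
      | plus d1 d2 ih1 ih2 =>
          intro α β γ hyp
          rw [subst_plus, subst_plus, subst_plus]
          exact strat_plus_congr
            (ih1 α β γ (fun w hw => hyp w (by simp [fv, hw])))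
            (ih2 α β γ (fun w hw => hyp w (by simp [fv, hw])))
      | mu v d0 ihd =>
          intro α β γ hyp
          -- abbreviations
          set v1 := muV β v d0 with hv1
          set β' := Function.update β v (Exp.var v1) with hβ'
          set B1 := subst β' d0 with hB1
          have hsubβ : subst β (Exp.mu v d0) = Exp.mu v1 B1 := subst_mu β v d0
          set v2 := muV α v1 B1 with hv2
          set α' := Function.update α v1 (Exp.var v2) with hα'
          set AA := subst α' B1 with hAA
          have hsubα : subst α (Exp.mu v1 B1) = Exp.mu v2 AA := subst_mu α v1 B1
          set v3 := muV γ v d0 with hv3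
          set γ' := Function.update γ v (Exp.var v3) with hγ'
          set C := subst γ' d0 with hCdef
          have hsubγ : subst γ (Exp.mu v d0) = Exp.mu v3 C := subst_mu γ v d0
          -- basic facts
          have hypn : ∀ w ∈ fv (Exp.mu v d0), Strat dest n (subst α (β w)) (γ w) :=
            fun w hw => strat_mono (hyp w hw)
          have hyp' : ∀ w, w ∈ fv d0 → w ≠ v → Strat dest (n + 1) (subst α (β w)) (γ w) :=
            fun w h1 h2 => hyp w (by simp only [fv]; exact Finset.mem_erase.2 ⟨h2, h1⟩)
          have hwfd : ∀ {w}, w ∈ fv d0 → w ≠ v → w ∈ (fv d0).erase v :=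
            fun h1 h2 => Finset.mem_erase.2 ⟨h2, h1⟩
          have F1 : ∀ {w}, w ∈ fv d0 → w ≠ v → v1 ∉ fv (β w) := by
            intro w h1 h2
            rw [hv1]
            exact muV_fresh β v d0 _ (hwfd h1 h2)
          have F3 : ∀ {w}, w ∈ fv d0 → w ≠ v → v3 ∉ fv (γ w) := by
            intro w h1 h2
            rw [hv3]
            exact muV_fresh γ v d0 _ (hwfd h1 h2)
          have hβ'w : ∀ {w}, w ≠ v → β' w = β w :=
            fun h => by rw [hβ']; exact Function.update_of_ne h _ _
          have hγ'w : ∀ {w}, w ≠ v → γ' w = γ w :=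
            fun h => by rw [hγ']; exact Function.update_of_ne h _ _
          have F4 : ∀ {w}, w ∈ fv d0 → w ≠ v → fv (β w) ⊆ (fv B1).erase v1 := by
            intro w h1 h2 u hu
            refine Finset.mem_erase.2 ⟨?_, ?_⟩
            · intro h
              rw [h] at hu
              exact F1 h1 h2 hu
            · rw [hB1, fv_subst]
              exact Finset.mem_biUnion.2 ⟨w, h1, by rw [hβ'w h2]; exact hu⟩
          have F2 : ∀ {w u}, w ∈ fv d0 → w ≠ v → u ∈ fv (β w) → v2 ∉ fv (α u) := by
            intro w u h1 h2 hu
            rw [hv2]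
            exact muV_fresh α v1 B1 u (F4 h1 h2 hu)
          have hα'u : ∀ {w u}, w ∈ fv d0 → w ≠ v → u ∈ fv (β w) → α' u = α u := by
            intro w u h1 h2 hu
            rw [hα']
            refine Function.update_of_ne ?_ _ _
            intro h
            rw [h] at hu
            exact F1 h1 h2 hu
          -- the two mu-expressions are Strat-n-related (by hC at level n)
          have hMM : Strat dest n (Exp.mu v2 AA) (Exp.mu v3 C) := by
            have := hC (Exp.mu v d0) α β γ hypn
            rwa [hsubβ, hsubα, hsubγ] at this
          -- calc1
          have calc1 : ∀ (w : ℕ), w ∈ fv d0 → w ≠ v → ∀ (c : Exp A), fv c ⊆ fv (β w) →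
              ∀ (A2 : Exp A), Strat dest n A2 (subst α' c) →
              Strat dest n (subst1 A2 v2 (Exp.mu v2 AA)) (subst α c) := by
            intro w hw hwv c hc A2 hrel
            set ρ2 := Function.update Exp.var v2 (Exp.mu v2 AA) with hρ2
            have s1 : Strat dest n (subst ρ2 A2) (subst ρ2 (subst α' c)) :=
              hM _ _ _ _ hrel (fun u _ => strat_refl n _)
            have s2 : Strat dest n (subst ρ2 (subst α' c))
                (subst (fun u => subst ρ2 (α' u)) c) :=
              hC c ρ2 α' _ (fun u _ => strat_refl n _)
            have s3 : subst (fun u => subst ρ2 (α' u)) c = subst α c := by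
              apply subst_congr_fv
              intro u hu
              rw [hα'u hw hwv (hc hu)]
              apply subst_id
              intro x hx
              refine Function.update_of_ne ?_ _ _
              intro h
              rw [h] at hx
              exact F2 hw hwv (hc hu) hx
            rw [subst1_def]
            exact strat_trans s1 (s3 ▸ s2)
          -- calc2
          have calc2 : ∀ (d0' A0' A2 s' : Exp A), fv d0' ⊆ fv d0 →
              Strat dest n A0' (subst β' d0') → Strat dest n A2 (subst α' A0') →
              Strat dest n s' (subst γ' d0') →
              Strat dest n (subst1 A2 v2 (Exp.mu v2 AA)) (subst1 s' v3 (Exp.mu v3 C)) := by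
            intro d0' A0' A2 s' hfv h1 h2 h3
            set ρ2 := Function.update Exp.var v2 (Exp.mu v2 AA) with hρ2
            set ρ3 := Function.update Exp.var v3 (Exp.mu v3 C) with hρ3
            set δ := fun u => subst ρ2 (α' u) with hδ
            set ε := fun w => subst δ (β' w) with hε
            set ε' := fun w => subst ρ3 (γ' w) with hε'
            have l1 : Strat dest n (subst ρ2 A2) (subst ρ2 (subst α' A0')) :=
              hM _ _ _ _ h2 (fun u _ => strat_refl n _)
            have l2 : Strat dest n (subst ρ2 (subst α' A0')) (subst δ A0') :=
              hC A0' ρ2 α' δ (fun u _ => strat_refl n _)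
            have l3 : Strat dest n (subst δ A0') (subst δ (subst β' d0')) :=
              hM _ _ _ _ h1 (fun u _ => strat_refl n _)
            have l4 : Strat dest n (subst δ (subst β' d0')) (subst ε d0') :=
              hC d0' δ β' ε (fun u _ => strat_refl n _)
            have r1 : Strat dest n (subst ρ3 s') (subst ρ3 (subst γ' d0')) :=
              hM _ _ _ _ h3 (fun u _ => strat_refl n _)
            have r2 : Strat dest n (subst ρ3 (subst γ' d0')) (subst ε' d0') :=
              hC d0' ρ3 γ' ε' (fun u _ => strat_refl n _)
            have mid : Strat dest n (subst ε d0') (subst ε' d0') := by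
              apply hM d0' d0' ε ε' (strat_refl n d0')
              intro w hw
              have hwd : w ∈ fv d0' := by
                rcases Finset.mem_union.1 hw with h | h <;> exact h
              by_cases hwv : w = v
              · have e1 : ε w = Exp.mu v2 AA := by
                  show subst δ (β' w) = _
                  rw [hwv, hβ', Function.update_self, subst_var]
                  show subst ρ2 (α' v1) = _
                  rw [hα', Function.update_self, subst_var, hρ2, Function.update_self]
                have e2 : ε' w = Exp.mu v3 C := by
                  show subst ρ3 (γ' w) = _
                  rw [hwv, hγ', Function.update_self, subst_var, hρ3, Function.update_self]
                rw [e1, e2]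
                exact hMM
              · have e1 : ε w = subst α (β w) := by
                  show subst δ (β' w) = _
                  rw [hβ'w hwv]
                  apply subst_congr_fv
                  intro u hu
                  show subst ρ2 (α' u) = α u
                  rw [hα'u (hfv hwd) hwv hu]
                  apply subst_id
                  intro x hx
                  refine Function.update_of_ne ?_ _ _
                  intro h
                  rw [h] at hx
                  exact F2 (hfv hwd) hwv hu hx
                have e2 : ε' w = γ w := by
                  show subst ρ3 (γ' w) = _
                  rw [hγ'w hwv]
                  apply subst_id
                  intro x hx
                  refine Function.update_of_ne ?_ _ _
                  intro h
                  rw [h] at hx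
                  exact F3 (hfv hwd) hwv hx
                rw [e1, e2]
                exact strat_mono (hyp' w (hfv hwd) hwv)
            rw [subst1_def, subst1_def]
            exact strat_trans l1 (strat_trans l2 (strat_trans l3 (strat_trans l4
              (strat_trans mid (strat_symm (strat_trans r1 r2))))))
          -- now prove the goal
          rw [hsubβ, hsubα, hsubγ]
          refine ⟨?_, ?_, ?_⟩
          · -- outputs
            intro u
            constructor
            · intro h
              obtain ⟨hA, huv2⟩ := out_mu.1 h
              rw [hAA] at hA
              obtain ⟨w1, hw1, hu1⟩ := outchar.1 hA
              rw [hB1] at hw1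
              obtain ⟨w, hw, hw1'⟩ := outchar.1 hw1
              rcases eq_or_ne w v with rfl | hwv
              · rw [hβ', Function.update_self, dest_var, Finset.mem_singleton] at hw1'
                obtain rfl := Sum.inr.inj hw1'
                rw [hα', Function.update_self, dest_var, Finset.mem_singleton] at hu1
                exact absurd (Sum.inr.inj hu1) huv2
              · rw [hβ'w hwv] at hw1'
                have hw1fv : w1 ∈ fv (β w) := out_fv hw1'
                rw [hα'u (out_fv hw) hwv hw1fv] at hu1
                have hout : Sum.inr u ∈ dest (subst α (β w)) := outchar.2 ⟨w1, hw1', hu1⟩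
                have hout' : Sum.inr u ∈ dest (γ w) :=
                  ((hyp' w (out_fv hw) hwv).1 u).1 hout
                apply out_mu.2
                refine ⟨?_, ?_⟩
                · rw [hCdef]
                  have := var_sub γ' hw
                  rw [hγ'w hwv] at this
                  exact this hout'
                · intro h
                  rw [h] at hout'
                  exact F3 (out_fv hw) hwv (out_fv hout')
            · intro h
              obtain ⟨hCm, huv3⟩ := out_mu.1 h
              rw [hCdef] at hCm
              obtain ⟨w, hw, hu1⟩ := outchar.1 hCm
              rcases eq_or_ne w v with rfl | hwv
              · rw [hγ', Function.update_self, dest_var, Finset.mem_singleton] at hu1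
                exact absurd (Sum.inr.inj hu1) huv3
              · rw [hγ'w hwv] at hu1
                have hout : Sum.inr u ∈ dest (subst α (β w)) :=
                  ((hyp' w (out_fv hw) hwv).1 u).2 hu1
                obtain ⟨w1, hw1, hu2⟩ := outchar.1 hout
                have hw1fv : w1 ∈ fv (β w) := out_fv hw1
                apply out_mu.2
                refine ⟨?_, ?_⟩
                · rw [hAA]
                  apply outchar.2
                  refine ⟨w1, ?_, ?_⟩
                  · rw [hB1]
                    have := var_sub β' hw
                    rw [hβ'w hwv] at this
                    exact this hw1
                  · rw [hα'u (out_fv hw) hwv hw1fv]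
                    exact hu2
                · intro hh
                  rw [hh] at hu2
                  exact F2 (out_fv hw) hwv hw1fv (out_fv hu2)
          · -- forward transitions
            intro a t ht
            obtain ⟨A2, hA2, rfl⟩ := tr_mu.1 ht
            rw [hAA] at hA2
            rcases transChar hM hC B1 α' a A2 hA2 with ⟨w1, hw1, htr⟩ | ⟨A0', hA0', hrel⟩
            · -- transition coming from a variable of B1
              rw [hB1] at hw1
              obtain ⟨w, hw, hw1'⟩ := outchar.1 hw1
              rcases eq_or_ne w v with rfl | hwv
              · rw [hβ', Function.update_self, dest_var, Finset.mem_singleton] at hw1'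
                obtain rfl := Sum.inr.inj hw1'
                rw [hα', Function.update_self, dest_var] at htr
                simp at htr
              · rw [hβ'w hwv] at hw1'
                have hw1fv : w1 ∈ fv (β w) := out_fv hw1'
                rw [hα'u (out_fv hw) hwv hw1fv] at htr
                have htr' : Sum.inl (a, A2) ∈ dest (subst α (β w)) :=
                  var_sub α hw1' htr
                obtain ⟨s, hs, hAs⟩ := (hyp' w (out_fv hw) hwv).2.1 a A2 htr'
                have htid : subst1 A2 v2 (Exp.mu v2 AA) = A2 := by
                  apply subst1_id
                  intro hx
                  exact F2 (out_fv hw) hwv hw1fv (tr_fv htr hx)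
                have hsC : Sum.inl (a, s) ∈ dest C := by
                  rw [hCdef]
                  have := var_sub γ' hw
                  rw [hγ'w hwv] at this
                  exact this hs
                have hsid : subst1 s v3 (Exp.mu v3 C) = s := by
                  apply subst1_id
                  intro hx
                  exact F3 (out_fv hw) hwv (tr_fv hs hx)
                refine ⟨subst1 s v3 (Exp.mu v3 C), tr_mu.2 ⟨s, hsC, rfl⟩, ?_⟩
                rw [htid, hsid]
                exact hAs
            · -- transition coming from a transition of B1
              rw [hB1] at hA0'
              rcases transChar hM hC d0 β' a A0' hA0' with ⟨w, hw, htr0⟩ | ⟨d0', hd0', hrel0⟩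
              · rcases eq_or_ne w v with rfl | hwv
                · rw [hβ', Function.update_self, dest_var] at htr0
                  simp at htr0
                · rw [hβ'w hwv] at htr0
                  obtain ⟨s0, hs0, hrel0'⟩ := transChar' hM hC (β w) α a A0' htr0
                  obtain ⟨s, hs, hss⟩ := (hyp' w (out_fv hw) hwv).2.1 a s0 hs0
                  have hsC : Sum.inl (a, s) ∈ dest C := by
                    rw [hCdef]
                    have := var_sub γ' hw
                    rw [hγ'w hwv] at this
                    exact this hs
                  have hsid : subst1 s v3 (Exp.mu v3 C) = s := by
                    apply subst1_id
                    intro hx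
                    exact F3 (out_fv hw) hwv (tr_fv hs hx)
                  refine ⟨subst1 s v3 (Exp.mu v3 C), tr_mu.2 ⟨s, hsC, rfl⟩, ?_⟩
                  rw [hsid]
                  have hc1 := calc1 w (out_fv hw) hwv A0' (tr_fv htr0) A2 hrel
                  exact strat_trans hc1 (strat_trans (strat_symm hrel0') hss)
              · obtain ⟨s', hs', hrels⟩ := transChar' hM hC d0 γ' a d0' hd0'
                have hs'C : Sum.inl (a, s') ∈ dest C := by rw [hCdef]; exact hs'
                refine ⟨subst1 s' v3 (Exp.mu v3 C), tr_mu.2 ⟨s', hs'C, rfl⟩, ?_⟩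
                exact calc2 d0' A0' A2 s' (tr_fv hd0') hrel0 hrel hrels
          · -- backward transitions
            intro a s hsm
            obtain ⟨s', hs', rfl⟩ := tr_mu.1 hsm
            rw [hCdef] at hs'
            rcases transChar hM hC d0 γ' a s' hs' with ⟨w, hw, htr⟩ | ⟨d0', hd0', hrels⟩
            · rcases eq_or_ne w v with rfl | hwv
              · rw [hγ', Function.update_self, dest_var] at htr
                simp at htr
              · rw [hγ'w hwv] at htr
                have hsid : subst1 s' v3 (Exp.mu v3 C) = s' := by
                  apply subst1_id
                  intro hx
                  exact F3 (out_fv hw) hwv (tr_fv htr hx)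
                obtain ⟨t1, ht1, h1s⟩ := (hyp' w (out_fv hw) hwv).2.2 a s' htr
                rcases transChar hM hC (β w) α a t1 ht1 with ⟨w1, hw1, htt⟩ | ⟨b', hb', hrelb⟩
                · have hw1fv : w1 ∈ fv (β w) := out_fv hw1
                  have hw1B : Sum.inr w1 ∈ dest B1 := by
                    rw [hB1]
                    have := var_sub β' hw
                    rw [hβ'w hwv] at this
                    exact this hw1
                  have httA : Sum.inl (a, t1) ∈ dest AA := by
                    rw [hAA]
                    have := var_sub α' hw1B
                    rw [hα'u (out_fv hw) hwv hw1fv] at this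
                    exact this htt
                  have htid : subst1 t1 v2 (Exp.mu v2 AA) = t1 := by
                    apply subst1_id
                    intro hx
                    exact F2 (out_fv hw) hwv hw1fv (tr_fv htt hx)
                  refine ⟨subst1 t1 v2 (Exp.mu v2 AA), tr_mu.2 ⟨t1, httA, rfl⟩, ?_⟩
                  rw [htid, hsid]
                  exact h1s
                · have hb'B : Sum.inl (a, b') ∈ dest B1 := by
                    rw [hB1]
                    have := var_sub β' hw
                    rw [hβ'w hwv] at this
                    exact this hb'
                  obtain ⟨A2, hA2, hrelA⟩ := transChar' hM hC B1 α' a b' hb'B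
                  have hA2A : Sum.inl (a, A2) ∈ dest AA := by rw [hAA]; exact hA2
                  refine ⟨subst1 A2 v2 (Exp.mu v2 AA), tr_mu.2 ⟨A2, hA2A, rfl⟩, ?_⟩
                  rw [hsid]
                  have hc1 := calc1 w (out_fv hw) hwv b' (tr_fv hb') A2 hrelA
                  exact strat_trans hc1 (strat_trans (strat_symm hrelb) h1s)
            · obtain ⟨A0', hA0', hrel0⟩ := transChar' hM hC d0 β' a d0' hd0'
              have hA0'B : Sum.inl (a, A0') ∈ dest B1 := by rw [hB1]; exact hA0'
              obtain ⟨A2, hA2, hrelA⟩ := transChar' hM hC B1 α' a A0' hA0'B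
              have hA2A : Sum.inl (a, A2) ∈ dest AA := by rw [hAA]; exact hA2
              refine ⟨subst1 A2 v2 (Exp.mu v2 AA), tr_mu.2 ⟨A2, hA2A, rfl⟩, ?_⟩
              exact calc2 d0' A0' A2 s' (tr_fv hd0') hrel0 hrelA hrels

end MainInd

/-- the stratification of bisimilarity is a congruence for simultaneous
substitution. `σg` and `σh` are the simultaneous substitutions
`[(g₁, …, g_m)/(v_{i₁}, …, v_{i_m})]` and `[(h₁, …, h_m)/(v_{i₁}, …, v_{i_m})]`,
characterised by their action on the distinct variables `vs` and by being the
identity elsewhere. -/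
theorem strat_subst_congruence {A : Type*} [DecidableEq A] {m : ℕ} (n : ℕ)
    (e f : Exp A) (gs hs : Fin m → Exp A) (vs : Fin m → ℕ)
    (hvs : Function.Injective vs)
    (σg σh : ℕ → Exp A)
    (hσg : ∀ j, σg (vs j) = gs j) (hσg' : ∀ w, w ∉ Set.range vs → σg w = .var w)
    (hσh : ∀ j, σh (vs j) = hs j) (hσh' : ∀ w, w ∉ Set.range vs → σh w = .var w)
    (hef : Strat dest n e f) (hgh : ∀ j : Fin m, Strat dest n (gs j) (hs j)) :
    Strat dest n (Exp.subst σg e) (Exp.subst σh f) := by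
  obtain ⟨hM, -⟩ := mainInd A n
  apply hM e f σg σh hef
  intro w _
  by_cases hw : w ∈ Set.range vs
  · obtain ⟨j, rfl⟩ := hw
    rw [hσg j, hσh j]
    exact hgh j
  · rw [hσg' w hw, hσh' w hw]
    exact strat_refl n _
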